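/- arXiv:0711.4346 — 2 statements merged into one kernel-verified Lean document; each statement's English description precedes it below -/
import Mathlib

section
/- Let G be a group, H a normal subgroup of finite index m with G/H cyclic generated by the image of γ ∈ G, acting on an abelian group D. Define Q: D → Ind_H^G D (functions f: G → D with f(hg)=hf(g)) by Q(x)(e)=x and Q(x)(γ^i)=0 for 1≤i≤m−1. Then Q induces an isomorphism D/(γ^m−1)D ≅ (Ind_H^G D)/(γ−1)(Ind_H^G D). -/
section Induced

variable {G : Type*} [Group G] {D : Type*} [AddCommGroup D] (H : Subgroup G)
variable [DistribMulAction H D]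

/-- The induced module `Ind_H^G D = {f : G → D | f (h * g) = h • f g for h ∈ H}`,
as an additive subgroup of the group of functions `G → D`. -/
def inducedModule : AddSubgroup (G → D) where
  carrier := {f | ∀ (h : H) (g : G), f (↑h * g) = h • f g}
  add_mem' := by
    intro a b ha hb h g
    simp only [Pi.add_apply, ha h g, hb h g, smul_add]
  zero_mem' := by
    intro h g
    simp
  neg_mem' := by
    intro a ha h g
    simp only [Pi.neg_apply, ha h g, smul_neg]

/-- The map `Q : D → Ind_H^G D`, sending `x` to the function supported on the trivial
coset `H`, with `Q(x)(h) = h • x` for `h ∈ H` and `Q(x)(g) = 0` for `g ∉ H`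
(so `Q(x)(e) = x` and `Q(x)(γ^i) = 0` for `1 ≤ i ≤ m − 1`). -/
noncomputable def QMap (x : D) : G → D := fun g =>
  letI := Classical.dec (g ∈ H)
  if hg : g ∈ H then (⟨g, hg⟩ : H) • x else 0

/-- The additive endomorphism `f ↦ γ • f` of `G → D`, where `(γ • f) g = f (g * γ)`. -/
def translationHom (γ : G) : (G → D) →+ (G → D) where
  toFun := fun f g => f (g * γ)
  map_zero' := rfl
  map_add' := fun _ _ => rfl

/-- The additive subgroup `(h − 1) D` of `D`, for `h ∈ H`. -/
def subA (h : H) : AddSubgroup D :=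
  (DistribMulAction.toAddMonoidHom D h - AddMonoidHom.id D).range

/-- The additive subgroup `(γ − 1) (Ind_H^G D)` of `G → D`. -/
def subB (γ : G) : AddSubgroup (G → D) :=
  AddSubgroup.map (translationHom γ - AddMonoidHom.id (G → D)) (inducedModule H)

end Induced

section Aux

variable {G : Type*} [Group G] {D : Type*} [AddCommGroup D]
variable (H : Subgroup G) [DistribMulAction H D]

lemma ind_spec {f : G → D} (hf : f ∈ inducedModule H) :
    ∀ (h : H) (g : G), f (↑h * g) = h • f g := hf

lemma qmap_mem' (x : D) : QMap H x ∈ inducedModule H := by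
  intro h g
  simp only [QMap]
  by_cases hg : g ∈ H
  · have hhg : (h : G) * g ∈ H := H.mul_mem h.2 hg
    rw [dif_pos hhg, dif_pos hg, ← mul_smul]
    congr 1
  · have hhg : (h : G) * g ∉ H := by
      intro hc
      exact hg (by simpa using H.mul_mem (H.inv_mem h.2) hc)
    rw [dif_neg hhg, dif_neg hg, smul_zero]

lemma qmap_zero' : QMap H (0 : D) = 0 := by
  funext g
  simp only [QMap, Pi.zero_apply]
  split_ifs with h
  · rw [smul_zero]
  · rfl

lemma qmap_add' (x y : D) : QMap H (x + y) = QMap H x + QMap H y := by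
  funext g
  simp only [QMap, Pi.add_apply]
  split_ifs with h
  · rw [smul_add]
  · rw [add_zero]

lemma qmap_one' (x : D) : QMap H x 1 = x := by
  simp only [QMap]
  rw [dif_pos H.one_mem]
  exact one_smul H x

variable (γ : G) (m : ℕ)

lemma qmap_pow' (hfree : ∀ i : ℕ, 0 < i → i < m → γ ^ i ∉ H) (x : D) {i : ℕ}
    (h0 : 0 < i) (hi : i < m) : QMap H x (γ ^ i) = 0 := by
  simp only [QMap]
  rw [dif_neg (hfree i h0 hi)]

lemma idx_uniq (hfree : ∀ i : ℕ, 0 < i → i < m → γ ^ i ∉ H)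
    {i j : ℕ} (hi : i < m) (hj : j < m) {g : G}
    (h1 : g * (γ ^ i)⁻¹ ∈ H) (h2 : g * (γ ^ j)⁻¹ ∈ H) : i = j := by
  have key : ∀ {i j : ℕ}, i ≤ j → j < m → ∀ {g : G},
      g * (γ ^ i)⁻¹ ∈ H → g * (γ ^ j)⁻¹ ∈ H → i = j := by
    intro i j hle hj g h1 h2
    have e1 : (g * (γ ^ j)⁻¹)⁻¹ * (g * (γ ^ i)⁻¹) = γ ^ j * (γ ^ i)⁻¹ := by group
    have e2 : γ ^ (j - i) * γ ^ i = γ ^ j := by rw [← pow_add, Nat.sub_add_cancel hle]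
    have e3 : γ ^ (j - i) = γ ^ j * (γ ^ i)⁻¹ := eq_mul_inv_of_mul_eq e2
    have hmem : γ ^ (j - i) ∈ H := by
      rw [e3, ← e1]; exact H.mul_mem (H.inv_mem h2) h1
    by_contra hne
    exact hfree (j - i) (by omega) (by omega) hmem
  rcases le_total i j with h | h
  · exact key h hj h1 h2
  · exact (key h hi h2 h1).symm

variable (hgen : ∀ g : G, ∃ i < m, ∃ h ∈ H, g = h * γ ^ i)

noncomputable def gIdx (g : G) : ℕ := (hgen g).choose

lemma gIdx_lt (g : G) : gIdx H γ m hgen g < m := (hgen g).choose_spec.1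

lemma gIdx_mem (g : G) : g * (γ ^ gIdx H γ m hgen g)⁻¹ ∈ H := by
  obtain ⟨h, hh, hgh⟩ := (hgen g).choose_spec.2
  have e : g * (γ ^ gIdx H γ m hgen g)⁻¹ = h := mul_inv_eq_iff_eq_mul.2 hgh
  rw [e]
  exact hh

noncomputable def extFun (d : ℕ → D) : G → D := fun g =>
  (⟨g * (γ ^ gIdx H γ m hgen g)⁻¹, gIdx_mem H γ m hgen g⟩ : H) • d (gIdx H γ m hgen g)

variable (hfree : ∀ i : ℕ, 0 < i → i < m → γ ^ i ∉ H)

include hfree in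
lemma extFun_apply (d : ℕ → D) {h : G} (hh : h ∈ H) {i : ℕ} (hi : i < m) :
    extFun H γ m hgen d (h * γ ^ i) = (⟨h, hh⟩ : H) • d i := by
  have h1 : (h * γ ^ i) * (γ ^ i)⁻¹ ∈ H := by simpa using hh
  have hidx : gIdx H γ m hgen (h * γ ^ i) = i :=
    idx_uniq H γ m hfree (gIdx_lt H γ m hgen _) hi (gIdx_mem H γ m hgen _) h1
  have key : ∀ (j : ℕ) (hj : (h * γ ^ i) * (γ ^ j)⁻¹ ∈ H), j = i →
      (⟨(h * γ ^ i) * (γ ^ j)⁻¹, hj⟩ : H) • d j = (⟨h, hh⟩ : H) • d i := by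
    rintro j hj rfl
    congr 1
    exact Subtype.ext (by simp)
  unfold extFun
  exact key _ _ hidx

include hfree in
lemma extFun_pow (d : ℕ → D) {i : ℕ} (hi : i < m) :
    extFun H γ m hgen d (γ ^ i) = d i := by
  have h := extFun_apply H γ m hgen hfree d H.one_mem hi
  rw [one_mul] at h
  rw [h]
  have h1 : (⟨(1 : G), H.one_mem⟩ : H) = 1 := rfl
  rw [h1, one_smul]

include hfree in
lemma extFun_mem (d : ℕ → D) : extFun H γ m hgen d ∈ inducedModule H := by
  intro h' g
  obtain ⟨i, hi, h, hh, rfl⟩ := hgen g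
  rw [← mul_assoc, extFun_apply H γ m hgen hfree d (H.mul_mem h'.2 hh) hi,
      extFun_apply H γ m hgen hfree d hh hi, ← mul_smul]
  congr 1

lemma trans_mem' {f : G → D} (hf : f ∈ inducedModule H) :
    translationHom γ f ∈ inducedModule H := by
  intro h g
  show f ((↑h * g) * γ) = h • f (g * γ)
  rw [mul_assoc]
  exact ind_spec H hf h (g * γ)

lemma ind_val_pow (hγm : γ ^ m ∈ H) {f : G → D} (hf : f ∈ inducedModule H) :
    f (γ ^ m) = (⟨γ ^ m, hγm⟩ : H) • f 1 := by
  have h := ind_spec H hf ⟨γ ^ m, hγm⟩ 1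
  simpa using h

include hgen in
lemma ind_funext {f₁ f₂ : G → D} (h1 : f₁ ∈ inducedModule H) (h2 : f₂ ∈ inducedModule H)
    (h : ∀ i < m, f₁ (γ ^ i) = f₂ (γ ^ i)) : f₁ = f₂ := by
  funext g
  obtain ⟨i, hi, h', hh', rfl⟩ := hgen g
  have e1 := ind_spec H h1 ⟨h', hh'⟩ (γ ^ i)
  have e2 := ind_spec H h2 ⟨h', hh'⟩ (γ ^ i)
  simp only at e1 e2
  rw [e1, e2, h i hi]

include hfree in
lemma coord_sub (hγm : γ ^ m ∈ H) (d : ℕ → D) {i : ℕ} (hi : i < m) :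
    (translationHom γ (extFun H γ m hgen d) - extFun H γ m hgen d) (γ ^ i)
      = (if i + 1 = m then (⟨γ ^ m, hγm⟩ : H) • d 0 else d (i + 1)) - d i := by
  have hpos : 0 < m := lt_of_le_of_lt (Nat.zero_le i) hi
  simp only [Pi.sub_apply]
  have ht : translationHom γ (extFun H γ m hgen d) (γ ^ i)
      = extFun H γ m hgen d (γ ^ (i + 1)) := by
    show extFun H γ m hgen d (γ ^ i * γ) = _
    rw [pow_succ]
  rw [ht, extFun_pow H γ m hgen hfree d hi]
  by_cases h : i + 1 = m
  · rw [if_pos h, h, ind_val_pow H γ m hγm (extFun_mem H γ m hgen hfree d)]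
    have h0 : extFun H γ m hgen d 1 = d 0 := by
      have h1 := extFun_pow H γ m hgen hfree d hpos
      rwa [pow_zero] at h1
    rw [h0]
  · rw [if_neg h, extFun_pow H γ m hgen hfree d (by omega)]

include hgen hfree in
lemma lemA (hγm : γ ^ m ∈ H) (y : D) :
    QMap H ((⟨γ ^ m, hγm⟩ : H) • y - y) ∈ subB H γ := by
  unfold subB
  refine AddSubgroup.mem_map.2
    ⟨extFun H γ m hgen (fun i => if i = 0 then y else (⟨γ ^ m, hγm⟩ : H) • y),
      extFun_mem H γ m hgen hfree _, ?_⟩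
  rw [AddMonoidHom.sub_apply, AddMonoidHom.id_apply]
  refine ind_funext H γ m hgen
    (sub_mem (trans_mem' H γ (extFun_mem H γ m hgen hfree _))
      (extFun_mem H γ m hgen hfree _))
    (qmap_mem' H _) ?_
  intro i hi
  rw [coord_sub H γ m hgen hfree hγm _ hi]
  by_cases h0 : i = 0
  · subst h0
    rw [pow_zero, qmap_one']
    by_cases h1 : 0 + 1 = m
    · rw [if_pos h1]
      simp
    · rw [if_neg h1]
      simp
  · rw [qmap_pow' H γ m hfree _ (by omega) hi]
    by_cases h1 : i + 1 = m
    · rw [if_pos h1]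
      simp [h0]
    · rw [if_neg h1]
      simp [h0]

include hgen hfree in
lemma lemB (hγm : γ ^ m ∈ H) {f : G → D} (hf : f ∈ inducedModule H) :
    f - QMap H (∑ i ∈ Finset.range m, f (γ ^ i)) ∈ subB H γ := by
  unfold subB
  refine AddSubgroup.mem_map.2
    ⟨extFun H γ m hgen (fun i => if i = 0 then 0 else -∑ j ∈ Finset.Ico i m, f (γ ^ j)),
      extFun_mem H γ m hgen hfree _, ?_⟩
  rw [AddMonoidHom.sub_apply, AddMonoidHom.id_apply]
  refine ind_funext H γ m hgen
    (sub_mem (trans_mem' H γ (extFun_mem H γ m hgen hfree _))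
      (extFun_mem H γ m hgen hfree _))
    (sub_mem hf (qmap_mem' H _)) ?_
  intro i hi
  rw [coord_sub H γ m hgen hfree hγm _ hi, Pi.sub_apply]
  by_cases h0 : i = 0
  · subst h0
    rw [pow_zero, qmap_one']
    simp only [if_pos rfl]
    by_cases h1 : 0 + 1 = m
    · have hm1 : m = 1 := by omega
      subst hm1
      rw [if_pos rfl, Finset.sum_range_one, pow_zero]
      simp
    · rw [if_neg h1]
      have hs : ∑ i ∈ Finset.range m, f (γ ^ i)
          = f (γ ^ 0) + ∑ j ∈ Finset.Ico 1 m, f (γ ^ j) := by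
        rw [Finset.range_eq_Ico, Finset.sum_eq_sum_Ico_succ_bot (by omega)]
      rw [hs, pow_zero]
      have h2 : (0 : ℕ) + 1 ≠ 0 := by omega
      simp only [if_neg h2]
      abel
  · rw [qmap_pow' H γ m hfree _ (by omega) hi]
    by_cases h1 : i + 1 = m
    · have hs : ∑ j ∈ Finset.Ico i m, f (γ ^ j) = f (γ ^ i) := by
        rw [← h1, Finset.sum_Ico_succ_top (le_refl i), Finset.Ico_self,
          Finset.sum_empty, zero_add]
      simp only [if_pos h1, if_neg h0, hs, if_pos rfl]
      simp
    · have h2 : i + 1 ≠ 0 := by omega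
      simp only [if_neg h1, if_neg h0, if_neg h2]
      have hs : ∑ j ∈ Finset.Ico i m, f (γ ^ j)
          = f (γ ^ i) + ∑ j ∈ Finset.Ico (i + 1) m, f (γ ^ j) :=
        Finset.sum_eq_sum_Ico_succ_bot hi _
      rw [hs]
      abel

include hfree in
lemma lemC (hm : 0 < m) (hγm : γ ^ m ∈ H) {x : D} (hx : QMap H x ∈ subB H γ) :
    x ∈ subA H (⟨γ ^ m, hγm⟩ : H) := by
  rw [subB] at hx
  obtain ⟨f, hf, heq⟩ := AddSubgroup.mem_map.1 hx
  rw [AddMonoidHom.sub_apply, AddMonoidHom.id_apply] at heq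
  have hsum : ∀ i : ℕ, (translationHom γ f - f) (γ ^ i) = f (γ ^ (i + 1)) - f (γ ^ i) := by
    intro i
    simp only [Pi.sub_apply]
    congr 2
    rw [pow_succ]
    rfl
  have h1 : ∑ i ∈ Finset.range m, (translationHom γ f - f) (γ ^ i)
      = f (γ ^ m) - f (γ ^ 0) := by
    calc ∑ i ∈ Finset.range m, (translationHom γ f - f) (γ ^ i)
        = ∑ i ∈ Finset.range m, (f (γ ^ (i + 1)) - f (γ ^ i)) :=
          Finset.sum_congr rfl fun i _ => hsum i
      _ = f (γ ^ m) - f (γ ^ 0) := Finset.sum_range_sub (fun i => f (γ ^ i)) m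
  have h2 : ∑ i ∈ Finset.range m, QMap H x (γ ^ i) = x := by
    rw [Finset.sum_eq_single_of_mem 0 (Finset.mem_range.2 hm)]
    · rw [pow_zero, qmap_one']
    · intro j hj hj0
      exact qmap_pow' H γ m hfree x (Nat.pos_of_ne_zero hj0) (Finset.mem_range.1 hj)
  rw [heq, h2, ind_val_pow H γ m hγm hf, pow_zero] at h1
  unfold subA
  refine AddMonoidHom.mem_range.2 ⟨f 1, ?_⟩
  rw [AddMonoidHom.sub_apply, AddMonoidHom.id_apply, DistribMulAction.toAddMonoidHom_apply]
  exact h1.symm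

end Aux


/-- Let `G` be a group, `H` a normal subgroup of finite index `m` with
`G/H` cyclic generated by the image of `γ ∈ G`, acting on an abelian group `D`.
Define `Q : D → Ind_H^G D` by `Q(x)(e) = x` and `Q(x)(γ^i) = 0` for `1 ≤ i ≤ m − 1`.
Then `Q` induces an isomorphism `D/(γ^m − 1) D ≅ (Ind_H^G D)/(γ − 1)(Ind_H^G D)`. -/
theorem statement2 {G : Type*} [Group G] {D : Type*} [AddCommGroup D]
    (H : Subgroup G) [H.Normal] [DistribMulAction H D]
    (γ : G) (m : ℕ) (hm : 0 < m) (hγm : γ ^ m ∈ H)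
    (hgen : ∀ g : G, ∃ i < m, ∃ h ∈ H, g = h * γ ^ i)
    (hfree : ∀ i : ℕ, 0 < i → i < m → γ ^ i ∉ H) :
    ∃ e : (D ⧸ subA H (⟨γ ^ m, hγm⟩ : H)) ≃+
        (↥(inducedModule (D := D) H) ⧸ (subB H γ).addSubgroupOf (inducedModule H)),
      ∀ (x : D) (hx : QMap H x ∈ inducedModule H),
        e (QuotientAddGroup.mk x) = QuotientAddGroup.mk ⟨QMap H x, hx⟩ := by
  classical
  let Qh : D →+ ↥(inducedModule (D := D) H) :=
    { toFun := fun x => ⟨QMap H x, qmap_mem' H x⟩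
      map_zero' := Subtype.ext (qmap_zero' H)
      map_add' := fun x y => Subtype.ext (qmap_add' H x y) }
  let φ : D →+ (↥(inducedModule (D := D) H) ⧸ (subB H γ).addSubgroupOf (inducedModule H)) :=
    (QuotientAddGroup.mk' ((subB H γ).addSubgroupOf (inducedModule H))).comp Qh
  have hφ : ∀ x : D, φ x = QuotientAddGroup.mk ⟨QMap H x, qmap_mem' H x⟩ := fun _ => rfl
  have hker1 : ∀ x ∈ subA H (⟨γ ^ m, hγm⟩ : H), φ x = 0 := by
    intro x hxA
    rw [hφ, QuotientAddGroup.eq_zero_iff, AddSubgroup.mem_addSubgroupOf]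
    obtain ⟨y, hy⟩ := AddMonoidHom.mem_range.1 hxA
    rw [AddMonoidHom.sub_apply, AddMonoidHom.id_apply,
      DistribMulAction.toAddMonoidHom_apply] at hy
    have := lemA H γ m hgen hfree hγm y
    rw [hy] at this
    exact this
  let lift := QuotientAddGroup.lift (subA H (⟨γ ^ m, hγm⟩ : H)) φ hker1
  have hlift : ∀ x : D, lift (QuotientAddGroup.mk x) = φ x := fun _ => rfl
  have hsurj : Function.Surjective lift := by
    intro q
    obtain ⟨⟨f, hf⟩, rfl⟩ := QuotientAddGroup.mk_surjective q
    refine ⟨QuotientAddGroup.mk (∑ i ∈ Finset.range m, f (γ ^ i)), ?_⟩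
    rw [hlift, hφ]
    rw [QuotientAddGroup.eq]
    rw [AddSubgroup.mem_addSubgroupOf]
    have hB := lemB H γ m hgen hfree hγm hf
    have : (((-⟨QMap H (∑ i ∈ Finset.range m, f (γ ^ i)), qmap_mem' H _⟩ + ⟨f, hf⟩ :
        ↥(inducedModule (D := D) H))) : G → D)
        = f - QMap H (∑ i ∈ Finset.range m, f (γ ^ i)) := by
      push_cast
      abel
    rw [this]
    exact hB
  have hinj : Function.Injective lift := by
    rw [injective_iff_map_eq_zero]
    intro q hq
    obtain ⟨x, rfl⟩ := QuotientAddGroup.mk_surjective q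
    rw [hlift, hφ, QuotientAddGroup.eq_zero_iff, AddSubgroup.mem_addSubgroupOf] at hq
    exact (QuotientAddGroup.eq_zero_iff x).2 (lemC H γ m hfree hm hγm hq)
  exact ⟨AddEquiv.ofBijective lift ⟨hinj, hsurj⟩, fun x hx => rfl⟩
end

section
/- For a Laurent series f = ∑_{k∈Z} a_k T^k over a field K of characteristic 0 (with finitely many negative terms), define res(f dT) = a_{−1} and Res(f) = res(f · dT/(1+T)). Then f lies in the image of the operator ∂ = (1+T) d/dT on K((T)) if and only if Res(f) = 0. -/
open HahnSeries

/-- The formal derivative `d/dT` on Laurent series. -/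
noncomputable def lderiv {K : Type*} [Field K] (f : LaurentSeries K) : LaurentSeries K where
  coeff := fun n => (n + 1 : ℤ) • f.coeff (n + 1)
  isPWO_support' := by
    refine Set.IsPWO.mono (f.isPWO_support.image_of_monotone
      (f := fun n => n - 1) (fun a b h => by dsimp only; omega)) ?_
    intro n hn
    have : f.coeff (n + 1) ≠ 0 := by
      intro h
      simp [Function.mem_support, h] at hn
    exact ⟨n + 1, this, by ring⟩

/-- The Laurent series `1 + T`. -/
noncomputable def onePlusT (K : Type*) [Field K] : LaurentSeries K :=
  1 + HahnSeries.single (1 : ℤ) (1 : K)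

/-- `res (f dT)`: the coefficient of `T⁻¹` in `f`. -/
noncomputable def res {K : Type*} [Field K] (f : LaurentSeries K) : K := f.coeff (-1)

/-- `Res f = res (f dT/(1+T))`: the residue of the differential form `f dT/(1+T)`. -/
noncomputable def Res {K : Type*} [Field K] (f : LaurentSeries K) : K :=
  res (f * (onePlusT K)⁻¹)

/-- Formal antiderivative of a Laurent series (ignoring the `T⁻¹` term). -/
noncomputable def antideriv {K : Type*} [Field K] (h : LaurentSeries K) : LaurentSeries K where
  coeff := fun n => if n = 0 then 0 else (n : K)⁻¹ * h.coeff (n - 1)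
  isPWO_support' := by
    refine Set.IsPWO.mono (h.isPWO_support.image_of_monotone
      (f := fun n => n + 1) (fun a b hab => by dsimp only; omega)) ?_
    intro n hn
    have : h.coeff (n - 1) ≠ 0 := by
      intro h0
      simp [Function.mem_support, h0] at hn
    exact ⟨n - 1, this, by ring⟩

lemma lderiv_antideriv {K : Type*} [Field K] [CharZero K] (h : LaurentSeries K)
    (h0 : h.coeff (-1) = 0) : lderiv (antideriv h) = h := by
  ext n
  show (n + 1 : ℤ) • (if n + 1 = 0 then 0 else ((n + 1 : ℤ) : K)⁻¹ * h.coeff (n + 1 - 1))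
      = h.coeff n
  rcases eq_or_ne n (-1) with rfl | hn
  · simp [h0]
  · have hne : n + 1 ≠ 0 := by omega
    have hcast : ((n + 1 : ℤ) : K) ≠ 0 := Int.cast_ne_zero.mpr hne
    rw [if_neg hne, zsmul_eq_mul, ← mul_assoc, mul_inv_cancel₀ hcast, one_mul]
    congr 1
    omega

lemma res_lderiv {K : Type*} [Field K] (g : LaurentSeries K) :
    (lderiv g).coeff (-1) = 0 := by
  show ((-1 : ℤ) + 1) • g.coeff (-1 + 1) = 0
  simp

lemma onePlusT_ne_zero (K : Type*) [Field K] : onePlusT K ≠ 0 := by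
  intro h
  have := congrArg (fun x : LaurentSeries K => x.coeff 0) h
  simp [onePlusT, HahnSeries.coeff_single] at this

/-- For a Laurent series `f = ∑ a_k T^k` over a field `K` of characteristic 0
(finitely many negative terms), with `res (f dT) = a₋₁` and `Res f = res (f · dT/(1+T))`,
the series `f` lies in the image of the operator `∂ = (1+T) d/dT` on `K((T))` if and only
if `Res f = 0`. -/
theorem statement4 {K : Type*} [Field K] [CharZero K] (f : LaurentSeries K) :
    (∃ g : LaurentSeries K, onePlusT K * lderiv g = f) ↔ Res f = 0 := by
  constructor
  · rintro ⟨g, rfl⟩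
    unfold Res res
    rw [mul_comm (onePlusT K), mul_assoc, mul_inv_cancel₀ (onePlusT_ne_zero K), mul_one]
    exact res_lderiv g
  · intro hres
    refine ⟨antideriv (f * (onePlusT K)⁻¹), ?_⟩
    rw [lderiv_antideriv _ hres]
    rw [mul_comm (onePlusT K), mul_assoc, inv_mul_cancel₀ (onePlusT_ne_zero K), mul_one]
end
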